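/- Let f, g : [−π, π] → ℝ be integrable and nonnegative. Suppose there exist δ₀ > 0 and c > 0 such that g(ω) ≥ c for almost every ω with |ω| < δ₀, and suppose that for every ε > 0 there exists δ > 0 such that |f(ω)/g(ω) − 1| ≤ ε for almost every ω with |ω| < δ. Then lim_{n→∞} M_f(n) / M_g(n) = 1, i.e. the ratio of the generalized mean squared displacements n∫_{−π}^{π} F_n(ω) f(ω) dω and n∫_{−π}^{π} F_n(ω) g(ω) dω converges to 1 as n → ∞. -/

import Mathlib

open MeasureTheory Real Filter Finset

/-- The `n`-th Fejér kernel `F_n(ω) = Σ_{j=-(n-1)}^{n-1} (1 - |j|/n) e^{-ijω}`,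
written in its (equal) real form via cosines. -/
noncomputable def fejerKernel (n : ℕ) (ω : ℝ) : ℝ :=
  ∑ j ∈ Finset.Icc (-(n : ℤ) + 1) ((n : ℤ) - 1), (1 - |(j : ℝ)| / n) * Real.cos (j * ω)

/-- The generalized mean squared displacement `M_S(n) = n ∫_{-π}^{π} F_n(ω) S(ω) dω`. -/
noncomputable def gmsd (S : ℝ → ℝ) (n : ℕ) : ℝ :=
  n * ∫ ω in (-π)..π, fejerKernel n ω * S ω

section FejerLemmas

lemma sum_Icc_neg (φ : ℤ → ℝ) (n : ℕ) :
    ∑ j ∈ Finset.Icc (-(n:ℤ)) (n:ℤ), φ j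
      = φ 0 + ∑ j ∈ Finset.range n, (φ (j+1) + φ (-(j+1))) := by
  induction n with
  | zero => simp
  | succ n ih =>
    have h1 : Finset.Icc (-(n+1:ℤ)) (n+1:ℤ)
        = insert (-(n+1:ℤ)) (insert ((n+1:ℤ)) (Finset.Icc (-(n:ℤ)) (n:ℤ))) := by
      ext x
      simp only [Finset.mem_Icc, Finset.mem_insert]
      omega
    have h2 : (-(n+1:ℤ)) ∉ insert ((n+1:ℤ)) (Finset.Icc (-(n:ℤ)) (n:ℤ)) := by
      simp only [Finset.mem_insert, Finset.mem_Icc]; omega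
    have h3 : ((n+1:ℤ)) ∉ Finset.Icc (-(n:ℤ)) (n:ℤ) := by
      simp only [Finset.mem_Icc]; omega
    push_cast
    rw [h1, Finset.sum_insert h2, Finset.sum_insert h3, ih, Finset.sum_range_succ]
    push_cast
    ring

lemma G_eq (n : ℕ) (ω : ℝ) :
    (∑ k ∈ Finset.range n, Real.cos (k*ω))^2 + (∑ k ∈ Finset.range n, Real.sin (k*ω))^2
    = n + 2 * ∑ j ∈ Finset.range n, ((n:ℝ) - (j+1)) * Real.cos ((j+1)*ω) := by
  induction n with
  | zero => simp
  | succ n ih =>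
    have hcross : (∑ k ∈ Finset.range n, Real.cos (k*ω)) * Real.cos (n*ω)
        + (∑ k ∈ Finset.range n, Real.sin (k*ω)) * Real.sin (n*ω)
        = ∑ j ∈ Finset.range n, Real.cos (((j:ℝ)+1)*ω) := by
      rw [Finset.sum_mul, Finset.sum_mul, ← Finset.sum_add_distrib]
      rw [← Finset.sum_range_reflect (fun j => Real.cos (((j:ℝ)+1)*ω)) n]
      refine Finset.sum_congr rfl fun k hk => ?_
      have hk' : k < n := Finset.mem_range.1 hk
      have hcast : ((n - 1 - k : ℕ) : ℝ) + 1 = (n:ℝ) - k := by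
        have h : ((n - 1 - k : ℕ) : ℝ) = (n:ℝ) - 1 - k := by
          push_cast [Nat.cast_sub (by omega : k ≤ n - 1), Nat.cast_sub (by omega : 1 ≤ n)]
          ring
        rw [h]; ring
      rw [hcast]
      rw [show ((n:ℝ) - k) * ω = (n:ℝ)*ω - (k:ℝ)*ω by ring, Real.cos_sub]
      ring
    rw [Finset.sum_range_succ, Finset.sum_range_succ (f := fun k => Real.sin ((k:ℝ)*ω))]
    have expand : (∑ k ∈ Finset.range n, Real.cos (k*ω) + Real.cos (n*ω))^2
        + (∑ k ∈ Finset.range n, Real.sin (k*ω) + Real.sin (n*ω))^2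
        = ((∑ k ∈ Finset.range n, Real.cos (k*ω))^2 + (∑ k ∈ Finset.range n, Real.sin (k*ω))^2)
          + (Real.cos (n*ω)^2 + Real.sin (n*ω)^2)
          + 2*((∑ k ∈ Finset.range n, Real.cos (k*ω)) * Real.cos (n*ω)
            + (∑ k ∈ Finset.range n, Real.sin (k*ω)) * Real.sin (n*ω)) := by ring
    rw [expand, Real.cos_sq_add_sin_sq, hcross, ih, Finset.sum_range_succ]
    push_cast
    have hsum : ∑ x ∈ Finset.range n, ((n:ℝ) + 1 - ((x:ℝ) + 1)) * Real.cos (((x:ℝ) + 1) * ω)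
        = ∑ x ∈ Finset.range n, (((n:ℝ) - ((x:ℝ) + 1)) * Real.cos (((x:ℝ) + 1) * ω)
            + Real.cos (((x:ℝ)+1)*ω)) :=
      Finset.sum_congr rfl fun x _ => by ring
    rw [hsum, Finset.sum_add_distrib]
    ring

lemma nfejer (n : ℕ) (ω : ℝ) :
    (n:ℝ) * fejerKernel n ω
    = (∑ k ∈ Finset.range n, Real.cos (k*ω))^2 + (∑ k ∈ Finset.range n, Real.sin (k*ω))^2 := by
  rcases Nat.eq_zero_or_pos n with rfl | hn
  · simp [fejerKernel]
  obtain ⟨m, rfl⟩ : ∃ m, n = m + 1 := ⟨n - 1, by omega⟩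
  rw [G_eq]
  unfold fejerKernel
  have hIcc : (-(↑(m+1) : ℤ) + 1) = -(m:ℤ) ∧ ((↑(m+1):ℤ) - 1) = (m:ℤ) := by
    constructor <;> push_cast <;> ring
  rw [hIcc.1, hIcc.2, sum_Icc_neg (fun j => (1 - |(j : ℝ)| / (m+1:ℕ)) * Real.cos (j * ω)) m]
  have hN : ((m+1:ℕ):ℝ) ≠ 0 := by positivity
  have hterm : ∀ j : ℕ, ((1 - |((j:ℤ)+1 : ℝ)| / ((m+1:ℕ):ℝ)) * Real.cos (((j:ℤ)+1) * ω)
      + (1 - |(-((j:ℤ)+1) : ℝ)| / ((m+1:ℕ):ℝ)) * Real.cos ((-((j:ℤ)+1)) * ω))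
      = 2 * (1 - ((j:ℝ)+1) / ((m+1:ℕ):ℝ)) * Real.cos (((j:ℝ)+1) * ω) := by
    intro j
    have h1 : |((j:ℝ)+1)| = (j:ℝ)+1 := abs_of_nonneg (by positivity)
    push_cast
    rw [show (-((j:ℝ)+1)) * ω = -(((j:ℝ)+1) * ω) by ring, Real.cos_neg, abs_neg, h1]
    ring
  push_cast
  push_cast at hterm
  simp only [hterm]
  rw [Finset.sum_range_succ, mul_add, Finset.mul_sum]
  have hx : ∀ x ∈ Finset.range m, ((m:ℝ)+1) * (2*(1-((x:ℝ)+1)/((m:ℝ)+1)) * Real.cos (((x:ℝ)+1)*ω))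
      = 2*(((m:ℝ)+1-((x:ℝ)+1)) * Real.cos (((x:ℝ)+1)*ω)) := by
    intro x _
    have h0 : ((m:ℝ)+1) ≠ 0 := by positivity
    field_simp
  rw [Finset.sum_congr rfl hx, mul_add, Finset.mul_sum]
  simp only [abs_zero, zero_div, sub_zero, zero_mul, Real.cos_zero, mul_one, one_mul]
  ring

lemma fejer_nonneg (n : ℕ) (ω : ℝ) : 0 ≤ fejerKernel n ω := by
  rcases Nat.eq_zero_or_pos n with rfl | hn
  · simp [fejerKernel]
  have h := nfejer n ω
  have hn' : (0:ℝ) < n := by exact_mod_cast hn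
  nlinarith [sq_nonneg (∑ k ∈ Finset.range n, Real.cos (k*ω)),
    sq_nonneg (∑ k ∈ Finset.range n, Real.sin (k*ω))]

lemma fejer_sum_eq_normSq (n : ℕ) (ω : ℝ) :
    (n:ℝ) * fejerKernel n ω
      = Complex.normSq (∑ k ∈ Finset.range n, Complex.exp (ω * Complex.I) ^ k) := by
  have hterm : ∀ k : ℕ, Complex.exp (ω * Complex.I) ^ k
      = ((Real.cos (k*ω) : ℝ) : ℂ) + ((Real.sin (k*ω) : ℝ) : ℂ) * Complex.I := by
    intro k
    rw [← Complex.exp_nat_mul,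
      show (k:ℂ) * ((ω:ℂ) * Complex.I) = ((((k:ℝ)*ω : ℝ)):ℂ) * Complex.I by push_cast; ring,
      Complex.exp_mul_I, ← Complex.ofReal_cos, ← Complex.ofReal_sin]
  have hsum : ∑ k ∈ Finset.range n, Complex.exp (ω * Complex.I) ^ k
      = ((∑ k ∈ Finset.range n, Real.cos (k*ω) : ℝ) : ℂ)
        + ((∑ k ∈ Finset.range n, Real.sin (k*ω) : ℝ) : ℂ) * Complex.I := by
    simp only [hterm]
    rw [Finset.sum_add_distrib, ← Finset.sum_mul]
    push_cast
    ring
  rw [hsum, Complex.normSq_add_mul_I, nfejer]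

lemma fejer_bound (n : ℕ) (ω : ℝ) (h : Real.sin (ω/2) ≠ 0) :
    (n:ℝ) * fejerKernel n ω ≤ 1 / Real.sin (ω/2)^2 := by
  set z : ℂ := Complex.exp (ω * Complex.I) with hzdef
  have hz1 : Complex.normSq (z - 1) = 4 * Real.sin (ω/2)^2 := by
    have hz : z - 1 = ((Real.cos ω - 1 : ℝ) : ℂ) + ((Real.sin ω : ℝ) : ℂ) * Complex.I := by
      rw [hzdef, Complex.exp_mul_I, ← Complex.ofReal_cos, ← Complex.ofReal_sin]
      push_cast; ring
    rw [hz, Complex.normSq_add_mul_I]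
    have h2 := Real.cos_two_mul (ω/2)
    have h3 : 2 * (ω/2) = ω := by ring
    have h4 := Real.sin_sq_add_cos_sq (ω/2)
    rw [h3] at h2
    nlinarith [Real.sin_sq_add_cos_sq ω]
  have hzne : z ≠ 1 := by
    intro hz
    rw [hz] at hz1
    simp at hz1
    exact h (by nlinarith [sq_nonneg (Real.sin (ω/2))])
  have habs1 : ‖z - 1‖ = 2 * |Real.sin (ω/2)| := by
    rw [Complex.norm_def, hz1]
    rw [show (4:ℝ) * Real.sin (ω/2)^2 = (2 * |Real.sin (ω/2)|)^2 by
      rw [mul_pow, sq_abs]; ring]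
    exact Real.sqrt_sq (by positivity)
  have habsn : ‖z ^ n - 1‖ ≤ 2 := by
    have h1 : ‖z ^ n - (1:ℂ)‖ ≤ ‖z ^ n‖ + ‖(1:ℂ)‖ := norm_sub_le _ _
    rw [norm_pow, hzdef, Complex.norm_exp_ofReal_mul_I, one_pow, norm_one] at h1
    linarith
  have hs : (0:ℝ) < |Real.sin (ω/2)| := abs_pos.2 h
  have habs : ‖∑ k ∈ Finset.range n, z ^ k‖ ≤ 1 / |Real.sin (ω/2)| := by
    rw [geom_sum_eq hzne, norm_div, habs1]
    rw [div_le_div_iff₀ (by positivity) hs]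
    calc ‖z ^ n - 1‖ * |Real.sin (ω/2)| ≤ 2 * |Real.sin (ω/2)| :=
          mul_le_mul_of_nonneg_right habsn (abs_nonneg _)
      _ = 1 * (2 * |Real.sin (ω/2)|) := by ring
  rw [fejer_sum_eq_normSq, ← Complex.sq_norm]
  calc ‖∑ k ∈ Finset.range n, z ^ k‖ ^ 2 ≤ (1 / |Real.sin (ω/2)|)^2 :=
        pow_le_pow_left₀ (by positivity) habs 2
    _ = 1 / Real.sin (ω/2)^2 := by rw [div_pow, one_pow, sq_abs]

lemma fejer_continuous (n : ℕ) : Continuous (fejerKernel n) := by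
  unfold fejerKernel
  fun_prop

lemma fejer_abs_le (n : ℕ) (ω : ℝ) : |fejerKernel n ω| ≤ 2*(n:ℝ)+1 := by
  unfold fejerKernel
  calc |∑ j ∈ Finset.Icc (-(n : ℤ) + 1) ((n : ℤ) - 1), (1 - |(j : ℝ)| / n) * Real.cos (j * ω)|
      ≤ ∑ j ∈ Finset.Icc (-(n : ℤ) + 1) ((n : ℤ) - 1), |(1 - |(j : ℝ)| / n) * Real.cos (j * ω)| :=
        Finset.abs_sum_le_sum_abs _ _
    _ ≤ ∑ j ∈ Finset.Icc (-(n : ℤ) + 1) ((n : ℤ) - 1), 1 := by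
        refine Finset.sum_le_sum fun j hj => ?_
        rw [abs_mul]
        have h1 : |1 - |(j : ℝ)| / n| ≤ 1 := by
          rcases Nat.eq_zero_or_pos n with rfl | hn
          · simp
          · have hj' := Finset.mem_Icc.1 hj
            have hjn : |(j:ℝ)| ≤ (n:ℝ) := by
              rw [← Int.cast_abs]
              have : |j| ≤ (n:ℤ) := abs_le.2 ⟨by omega, by omega⟩
              exact_mod_cast this
            have hn' : (0:ℝ) < n := by exact_mod_cast hn
            rw [abs_le]
            constructor
            · have : |(j:ℝ)| / n ≤ 1 := by rw [div_le_one hn']; exact hjn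
              linarith
            · have : 0 ≤ |(j:ℝ)| / n := by positivity
              linarith
        calc |1 - |(j : ℝ)| / n| * |Real.cos (j * ω)| ≤ 1 * 1 :=
              mul_le_mul h1 (Real.abs_cos_le_one _) (abs_nonneg _) zero_le_one
          _ = 1 := by ring
    _ ≤ 2*(n:ℝ)+1 := by
        rw [Finset.sum_const, nsmul_eq_mul, mul_one]
        have : ((Finset.Icc (-(n : ℤ) + 1) ((n : ℤ) - 1)).card : ℤ) ≤ 2*n+1 := by
          rw [Int.card_Icc]
          omega
        have h2 : ((Finset.Icc (-(n : ℤ) + 1) ((n : ℤ) - 1)).card : ℝ) ≤ ((2*n+1 : ℤ) : ℝ) := by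
          exact_mod_cast this
        push_cast at h2 ⊢
        linarith

lemma integral_cos_int (j : ℤ) :
    ∫ ω in (-π)..π, Real.cos ((j:ℝ) * ω) = if j = 0 then 2*π else 0 := by
  rcases eq_or_ne j 0 with rfl | hj
  · simp only [Int.cast_zero, zero_mul, Real.cos_zero, if_pos]
    rw [intervalIntegral.integral_const]
    simp [smul_eq_mul]
    ring
  · have hj' : (j:ℝ) ≠ 0 := Int.cast_ne_zero.2 hj
    rw [if_neg hj, intervalIntegral.integral_comp_mul_left Real.cos hj', integral_cos]
    rw [show (j:ℝ) * -π = -((j:ℝ)*π) by ring, Real.sin_neg, Real.sin_int_mul_pi]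
    simp

lemma fejer_integral (n : ℕ) (hn : 1 ≤ n) : ∫ ω in (-π)..π, fejerKernel n ω = 2*π := by
  unfold fejerKernel
  rw [intervalIntegral.integral_finset_sum]
  · have : ∀ j ∈ Finset.Icc (-(n : ℤ) + 1) ((n : ℤ) - 1),
        ∫ ω in (-π)..π, (1 - |(j : ℝ)| / n) * Real.cos (j * ω)
          = if j = 0 then 2*π else 0 := by
      intro j hj
      rw [intervalIntegral.integral_const_mul, integral_cos_int]
      rcases eq_or_ne j 0 with rfl | hj0
      · simp
      · simp [hj0]
    rw [Finset.sum_congr rfl this, Finset.sum_ite_eq' (Finset.Icc _ _) (0:ℤ) (fun _ => 2*π)]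
    rw [if_pos]
    simp only [Finset.mem_Icc]
    omega
  · intro j hj
    apply Continuous.intervalIntegrable
    fun_prop

lemma tail_bound (n : ℕ) {δ ω : ℝ} (hδ : 0 < δ) (hδπ : δ ≤ π) (h1 : δ ≤ |ω|) (h2 : |ω| ≤ π) :
    (n:ℝ) * fejerKernel n ω ≤ 1 / Real.sin (δ/2)^2 := by
  have hπ := Real.pi_pos
  have hsδ : 0 < Real.sin (δ/2) :=
    Real.sin_pos_of_pos_of_lt_pi (by linarith) (by linarith)
  have habs : Real.sin (|ω|/2)^2 = Real.sin (ω/2)^2 := by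
    rcases abs_cases ω with ⟨h, _⟩ | ⟨h, _⟩
    · rw [h]
    · rw [h, show -ω/2 = -(ω/2) by ring, Real.sin_neg]
      ring
  have hmono : Real.sin (δ/2) ≤ Real.sin (|ω|/2) := by
    rcases eq_or_lt_of_le h1 with h | h
    · rw [← h]
    · exact le_of_lt (Real.strictMonoOn_sin
        ⟨by linarith, by linarith⟩ ⟨by linarith [abs_nonneg ω], by linarith⟩ (by linarith))
  have hsω : 0 < Real.sin (ω/2)^2 := by
    rw [← habs]
    have : 0 < Real.sin (|ω|/2) := lt_of_lt_of_le hsδ hmono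
    positivity
  have hsq : Real.sin (δ/2)^2 ≤ Real.sin (ω/2)^2 := by
    rw [← habs]
    exact pow_le_pow_left₀ (le_of_lt hsδ) hmono 2
  have hne : Real.sin (ω/2) ≠ 0 := by
    intro h; rw [h] at hsω; simp at hsω
  calc (n:ℝ) * fejerKernel n ω ≤ 1 / Real.sin (ω/2)^2 := fejer_bound n ω hne
    _ ≤ 1 / Real.sin (δ/2)^2 := one_div_le_one_div_of_le (by positivity) hsq

end FejerLemmas

set_option maxHeartbeats 2000000 in
theorem msd_ratio_tendsto_one_of_psd_ratio_tendsto_one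
    (f g : ℝ → ℝ)
    (hfint : IntegrableOn f (Set.Icc (-π) π))
    (hgint : IntegrableOn g (Set.Icc (-π) π))
    (hfnonneg : ∀ ω, 0 ≤ f ω)
    (hgnonneg : ∀ ω, 0 ≤ g ω)
    (hgpos : ∃ δ₀ > (0 : ℝ), ∃ c > (0 : ℝ),
      ∀ᵐ ω : ℝ, |ω| < δ₀ → c ≤ g ω)
    (hratio : ∀ ε > (0 : ℝ), ∃ δ > (0 : ℝ),
      ∀ᵐ ω : ℝ, |ω| < δ → |f ω / g ω - 1| ≤ ε) :
    Tendsto (fun n : ℕ => gmsd f n / gmsd g n) atTop (nhds 1) := by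
  have hπ := Real.pi_pos
  obtain ⟨δ₀, hδ₀, c, hc, hgae⟩ := hgpos
  -- subset helper
  have hsub : ∀ {a b : ℝ}, -π ≤ a → b ≤ π → a ≤ b → Set.uIcc a b ⊆ Set.Icc (-π) π := by
    intro a b ha hb hab
    rw [Set.uIcc_of_le hab]
    exact Set.Icc_subset_Icc ha hb
  -- interval integrability of products with the Fejér kernel
  have hFmul : ∀ (h : ℝ → ℝ), IntegrableOn h (Set.Icc (-π) π) → ∀ (n : ℕ) {a b : ℝ},
      -π ≤ a → b ≤ π → a ≤ b →
      IntervalIntegrable (fun ω => fejerKernel n ω * h ω) volume a b := by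
    intro h hh n a b ha hb hab
    apply MeasureTheory.IntegrableOn.intervalIntegrable
    apply MeasureTheory.Integrable.bdd_mul (hh.mono_set (hsub ha hb hab))
      ((fejer_continuous n).aestronglyMeasurable.restrict)
    exact Filter.Eventually.of_forall (fun ω => show ‖fejerKernel n ω‖ ≤ 2*(n:ℝ)+1 by simpa [Real.norm_eq_abs] using fejer_abs_le n ω)
  have hIsum : ∀ {a b : ℝ}, -π ≤ a → b ≤ π → a ≤ b →
      IntervalIntegrable (fun ω => f ω + g ω) volume a b := by
    intro a b ha hb hab
    exact (((hfint.mono_set (hsub ha hb hab)).intervalIntegrable).add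
      ((hgint.mono_set (hsub ha hb hab)).intervalIntegrable))
  -- the small interval for the lower bound
  set δ₁ : ℝ := min (δ₀/2) π with hδ₁def
  have hδ₁pos : 0 < δ₁ := lt_min (by linarith) hπ
  have hδ₁π : δ₁ ≤ π := min_le_right _ _
  have hδ₁δ₀ : δ₁ < δ₀ := lt_of_le_of_lt (min_le_left _ _) (by linarith)
  have hs₀ : 0 < Real.sin (δ₁/2) := Real.sin_pos_of_pos_of_lt_pi (by linarith) (by linarith)
  -- STEP 1 : lower bound for gmsd g
  have key_lower : ∀ n : ℕ, 1 ≤ n →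
      2*π*c*n - 2*π*c/Real.sin (δ₁/2)^2 ≤ gmsd g n := by
    intro n hn
    have hn0 : (0:ℝ) ≤ n := Nat.cast_nonneg n
    have hFg1 : IntervalIntegrable (fun ω => fejerKernel n ω * g ω) volume (-π) (-δ₁) :=
      hFmul g hgint n le_rfl (by linarith) (by linarith)
    have hFg2 : IntervalIntegrable (fun ω => fejerKernel n ω * g ω) volume (-δ₁) δ₁ :=
      hFmul g hgint n (by linarith) (by linarith) (by linarith)
    have hFg3 : IntervalIntegrable (fun ω => fejerKernel n ω * g ω) volume δ₁ π :=
      hFmul g hgint n (by linarith) le_rfl (by linarith)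
    have hsplit : ∫ ω in (-π)..π, fejerKernel n ω * g ω
        = (∫ ω in (-π)..(-δ₁), fejerKernel n ω * g ω)
          + ((∫ ω in (-δ₁)..δ₁, fejerKernel n ω * g ω)
            + (∫ ω in δ₁..π, fejerKernel n ω * g ω)) := by
      rw [intervalIntegral.integral_add_adjacent_intervals hFg2 hFg3,
        intervalIntegral.integral_add_adjacent_intervals hFg1 (hFg2.trans hFg3)]
    have htail1 : 0 ≤ ∫ ω in (-π)..(-δ₁), fejerKernel n ω * g ω :=
      intervalIntegral.integral_nonneg (by linarith)
        (fun u _ => mul_nonneg (fejer_nonneg n u) (hgnonneg u))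
    have htail2 : 0 ≤ ∫ ω in δ₁..π, fejerKernel n ω * g ω :=
      intervalIntegral.integral_nonneg (by linarith)
        (fun u _ => mul_nonneg (fejer_nonneg n u) (hgnonneg u))
    have hmid : c * ∫ ω in (-δ₁)..δ₁, fejerKernel n ω
        ≤ ∫ ω in (-δ₁)..δ₁, fejerKernel n ω * g ω := by
      rw [← intervalIntegral.integral_const_mul]
      apply intervalIntegral.integral_mono_ae_restrict (by linarith)
        (((fejer_continuous n).intervalIntegrable _ _).const_mul c) hFg2
      filter_upwards [ae_restrict_mem measurableSet_Icc, ae_restrict_of_ae hgae] with ω hω hg'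
      have hωδ₀ : |ω| < δ₀ := by
        rw [abs_lt]
        exact ⟨by linarith [hω.1], by linarith [hω.2]⟩
      have h1 := hg' hωδ₀
      nlinarith [mul_nonneg (fejer_nonneg n ω) (sub_nonneg.2 h1)]
    -- Fejér kernel tail estimates
    have hFc : ∀ a b : ℝ, IntervalIntegrable (fejerKernel n) volume a b :=
      fun a b => (fejer_continuous n).intervalIntegrable _ _
    have hFsplit : (∫ ω in (-π)..(-δ₁), fejerKernel n ω)
        + ((∫ ω in (-δ₁)..δ₁, fejerKernel n ω) + (∫ ω in δ₁..π, fejerKernel n ω)) = 2*π := by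
      rw [intervalIntegral.integral_add_adjacent_intervals (hFc _ _) (hFc _ _),
        intervalIntegral.integral_add_adjacent_intervals (hFc _ _) (hFc _ _)]
      exact fejer_integral n hn
    have hFtail : ∀ a b : ℝ, -π ≤ a → b ≤ π → a ≤ b → b - a ≤ π → (∀ x ∈ Set.Icc a b, δ₁ ≤ |x|) →
        (n:ℝ) * ∫ ω in a..b, fejerKernel n ω ≤ π / Real.sin (δ₁/2)^2 := by
      intro a b ha hb hab hlen habs
      rw [← intervalIntegral.integral_const_mul]
      calc ∫ ω in a..b, (n:ℝ) * fejerKernel n ω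
          ≤ ∫ _ω in a..b, 1/Real.sin (δ₁/2)^2 := by
            apply intervalIntegral.integral_mono_on hab ((hFc a b).const_mul _)
              intervalIntegrable_const
            intro x hx
            refine tail_bound n hδ₁pos hδ₁π (habs x hx) ?_
            rw [abs_le]
            exact ⟨by linarith [hx.1], by linarith [hx.2]⟩
        _ = (b - a) * (1/Real.sin (δ₁/2)^2) := by
            rw [intervalIntegral.integral_const, smul_eq_mul]
        _ ≤ π / Real.sin (δ₁/2)^2 := by
            rw [div_eq_mul_one_div π]
            apply mul_le_mul_of_nonneg_right (by linarith) (by positivity)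
    have hFt1 : (n:ℝ) * ∫ ω in (-π)..(-δ₁), fejerKernel n ω ≤ π / Real.sin (δ₁/2)^2 := by
      apply hFtail _ _ le_rfl (by linarith) (by linarith) (by linarith)
      intro x hx
      rw [abs_of_nonpos (by linarith [hx.2])]
      linarith [hx.2]
    have hFt3 : (n:ℝ) * ∫ ω in δ₁..π, fejerKernel n ω ≤ π / Real.sin (δ₁/2)^2 := by
      apply hFtail _ _ (by linarith) le_rfl (by linarith) (by linarith)
      intro x hx
      rw [abs_of_nonneg (by linarith [hx.1])]
      exact hx.1
    have hmidF : 2*π*(n:ℝ) - 2*π/Real.sin (δ₁/2)^2 ≤ (n:ℝ) * ∫ ω in (-δ₁)..δ₁, fejerKernel n ω := by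
      have e1 : (∫ ω in (-δ₁)..δ₁, fejerKernel n ω)
          = 2*π - (∫ ω in (-π)..(-δ₁), fejerKernel n ω) - (∫ ω in δ₁..π, fejerKernel n ω) := by
        linarith
      rw [e1, mul_sub, mul_sub]
      have hπs : 2*π/Real.sin (δ₁/2)^2
          = π/Real.sin (δ₁/2)^2 + π/Real.sin (δ₁/2)^2 := by ring
      rw [hπs]
      linarith [hFt1, hFt3]
    unfold gmsd
    rw [hsplit]
    calc 2*π*c*(n:ℝ) - 2*π*c/Real.sin (δ₁/2)^2
        = c * (2*π*(n:ℝ) - 2*π/Real.sin (δ₁/2)^2) := by ring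
      _ ≤ c * ((n:ℝ) * ∫ ω in (-δ₁)..δ₁, fejerKernel n ω) :=
          mul_le_mul_of_nonneg_left hmidF hc.le
      _ = (n:ℝ) * (c * ∫ ω in (-δ₁)..δ₁, fejerKernel n ω) := by ring
      _ ≤ (n:ℝ) * ∫ ω in (-δ₁)..δ₁, fejerKernel n ω * g ω :=
          mul_le_mul_of_nonneg_left hmid hn0
      _ ≤ (n:ℝ) * ((∫ ω in (-π)..(-δ₁), fejerKernel n ω * g ω)
          + ((∫ ω in (-δ₁)..δ₁, fejerKernel n ω * g ω)
            + (∫ ω in δ₁..π, fejerKernel n ω * g ω))) := by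
          nlinarith [mul_nonneg hn0 htail1, mul_nonneg hn0 htail2]
  -- STEP 2 : difference bound
  have key_diff : ∀ ε > (0:ℝ), ∃ K ≥ (0:ℝ), ∀ n : ℕ, 1 ≤ n →
      |gmsd f n - gmsd g n| ≤ ε * gmsd g n + K := by
    intro ε hε
    obtain ⟨δ, hδ, hae⟩ := hratio ε hε
    set δ₂ : ℝ := min (δ/2) δ₁ with hδ₂def
    have hδ₂pos : 0 < δ₂ := lt_min (by linarith) hδ₁pos
    have hδ₂π : δ₂ ≤ π := le_trans (min_le_right _ _) hδ₁π
    have hδ₂δ : δ₂ < δ := lt_of_le_of_lt (min_le_left _ _) (by linarith)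
    have hδ₂δ₀ : δ₂ < δ₀ := lt_of_le_of_lt (min_le_right _ _) hδ₁δ₀
    have hs₂ : 0 < Real.sin (δ₂/2) := Real.sin_pos_of_pos_of_lt_pi (by linarith) (by linarith)
    have hIfull : 0 ≤ ∫ ω in (-π)..π, (f ω + g ω) :=
      intervalIntegral.integral_nonneg (by linarith)
        (fun u _ => add_nonneg (hfnonneg u) (hgnonneg u))
    refine ⟨(1/Real.sin (δ₂/2)^2) * ∫ ω in (-π)..π, (f ω + g ω),
      mul_nonneg (by positivity) hIfull, ?_⟩
    intro n hn
    have hn0 : (0:ℝ) ≤ n := Nat.cast_nonneg n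
    set D : ℝ → ℝ := fun ω => fejerKernel n ω * f ω - fejerKernel n ω * g ω with hDdef
    have hD : ∀ {a b : ℝ}, -π ≤ a → b ≤ π → a ≤ b → IntervalIntegrable D volume a b :=
      fun ha hb hab => (hFmul f hfint n ha hb hab).sub (hFmul g hgint n ha hb hab)
    have hdiff : gmsd f n - gmsd g n = (n:ℝ) * ∫ ω in (-π)..π, D ω := by
      unfold gmsd
      rw [hDdef, intervalIntegral.integral_sub (hFmul f hfint n le_rfl le_rfl (by linarith))
        (hFmul g hgint n le_rfl le_rfl (by linarith))]
      ring
    have hsplitD : ∫ ω in (-π)..π, D ω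
        = (∫ ω in (-π)..(-δ₂), D ω) + ((∫ ω in (-δ₂)..δ₂, D ω) + (∫ ω in δ₂..π, D ω)) := by
      rw [intervalIntegral.integral_add_adjacent_intervals
          (hD (by linarith) (by linarith) (by linarith)) (hD (by linarith) le_rfl (by linarith)),
        intervalIntegral.integral_add_adjacent_intervals
          (hD le_rfl (by linarith) (by linarith)) (hD (by linarith) le_rfl (by linarith))]
    -- pointwise facts on the middle interval (a.e.)
    have hmid_ptwise : ∀ᵐ ω ∂(volume.restrict (Set.Icc (-δ₂) δ₂)),
        D ω ≤ ε * (fejerKernel n ω * g ω) ∧ -(ε * (fejerKernel n ω * g ω)) ≤ D ω := by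
      filter_upwards [ae_restrict_mem measurableSet_Icc, ae_restrict_of_ae hgae,
        ae_restrict_of_ae hae] with ω hω hg' hr'
      have hωδ₀ : |ω| < δ₀ := by
        rw [abs_lt]; exact ⟨by linarith [hω.1], by linarith [hω.2]⟩
      have hωδ : |ω| < δ := by
        rw [abs_lt]; exact ⟨by linarith [hω.1], by linarith [hω.2]⟩
      have hgc := hg' hωδ₀
      have hgw : 0 < g ω := lt_of_lt_of_le hc hgc
      have hfg : |f ω - g ω| ≤ ε * g ω := by
        have he : f ω - g ω = (f ω / g ω - 1) * g ω := by field_simp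
        rw [he, abs_mul, abs_of_pos hgw]
        exact mul_le_mul_of_nonneg_right (hr' hωδ) hgw.le
      have hF0 := fejer_nonneg n ω
      rw [abs_le] at hfg
      constructor
      · have := mul_le_mul_of_nonneg_left hfg.2 hF0
        simp only [hDdef]
        nlinarith
      · have := mul_le_mul_of_nonneg_left hfg.1 hF0
        simp only [hDdef]
        nlinarith
    have hFgmid : IntervalIntegrable (fun ω => fejerKernel n ω * g ω) volume (-δ₂) δ₂ :=
      hFmul g hgint n (by linarith) (by linarith) (by linarith)
    have hmidupper : ∫ ω in (-δ₂)..δ₂, D ω ≤ ε * ∫ ω in (-δ₂)..δ₂, fejerKernel n ω * g ω := by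
      rw [← intervalIntegral.integral_const_mul]
      apply intervalIntegral.integral_mono_ae_restrict (by linarith)
        (hD (by linarith) (by linarith) (by linarith)) (hFgmid.const_mul ε)
      filter_upwards [hmid_ptwise] with ω hω using hω.1
    have hmidlower : -(ε * ∫ ω in (-δ₂)..δ₂, fejerKernel n ω * g ω)
        ≤ ∫ ω in (-δ₂)..δ₂, D ω := by
      rw [← intervalIntegral.integral_const_mul, ← intervalIntegral.integral_neg]
      apply intervalIntegral.integral_mono_ae_restrict (by linarith)
        ((hFgmid.const_mul ε).neg) (hD (by linarith) (by linarith) (by linarith))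
      filter_upwards [hmid_ptwise] with ω hω using hω.2
    -- the middle ∫ F g is at most the full one
    have hmidle : ∫ ω in (-δ₂)..δ₂, fejerKernel n ω * g ω
        ≤ ∫ ω in (-π)..π, fejerKernel n ω * g ω := by
      have hsplitg : ∫ ω in (-π)..π, fejerKernel n ω * g ω
          = (∫ ω in (-π)..(-δ₂), fejerKernel n ω * g ω)
            + ((∫ ω in (-δ₂)..δ₂, fejerKernel n ω * g ω)
              + (∫ ω in δ₂..π, fejerKernel n ω * g ω)) := by
        rw [intervalIntegral.integral_add_adjacent_intervals hFgmid
            (hFmul g hgint n (by linarith) le_rfl (by linarith)),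
          intervalIntegral.integral_add_adjacent_intervals
            (hFmul g hgint n le_rfl (by linarith) (by linarith))
            (hFmul g hgint n (by linarith) le_rfl (by linarith))]
      have t1 : 0 ≤ ∫ ω in (-π)..(-δ₂), fejerKernel n ω * g ω :=
        intervalIntegral.integral_nonneg (by linarith)
          (fun u _ => mul_nonneg (fejer_nonneg n u) (hgnonneg u))
      have t2 : 0 ≤ ∫ ω in δ₂..π, fejerKernel n ω * g ω :=
        intervalIntegral.integral_nonneg (by linarith)
          (fun u _ => mul_nonneg (fejer_nonneg n u) (hgnonneg u))
      linarith
    have hmidg0 : 0 ≤ ∫ ω in (-δ₂)..δ₂, fejerKernel n ω * g ω :=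
      intervalIntegral.integral_nonneg (by linarith)
        (fun u _ => mul_nonneg (fejer_nonneg n u) (hgnonneg u))
    have hIM : |(n:ℝ) * ∫ ω in (-δ₂)..δ₂, D ω| ≤ ε * gmsd g n := by
      rw [abs_le]
      have hgl : ε * ((n:ℝ) * ∫ ω in (-δ₂)..δ₂, fejerKernel n ω * g ω) ≤ ε * gmsd g n := by
        apply mul_le_mul_of_nonneg_left _ hε.le
        unfold gmsd
        exact mul_le_mul_of_nonneg_left hmidle hn0
      constructor
      · have := mul_le_mul_of_nonneg_left hmidlower hn0
        nlinarith
      · have := mul_le_mul_of_nonneg_left hmidupper hn0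
        nlinarith
    -- tail bounds
    have htailb : ∀ a b : ℝ, -π ≤ a → b ≤ π → a ≤ b → (∀ x ∈ Set.Icc a b, δ₂ ≤ |x|) →
        |(n:ℝ) * ∫ ω in a..b, D ω|
          ≤ (1/Real.sin (δ₂/2)^2) * ∫ ω in a..b, (f ω + g ω) := by
      intro a b ha hb hab habs
      have hptw : ∀ x ∈ Set.Icc a b,
          (n:ℝ) * D x ≤ (1/Real.sin (δ₂/2)^2) * (f x + g x)
          ∧ -((1/Real.sin (δ₂/2)^2) * (f x + g x)) ≤ (n:ℝ) * D x := by
        intro x hx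
        have hxπ : |x| ≤ π := by
          rw [abs_le]; exact ⟨by linarith [hx.1], by linarith [hx.2]⟩
        have hnF := tail_bound n hδ₂pos hδ₂π (habs x hx) hxπ
        have hF0 := fejer_nonneg n x
        have hf0 := hfnonneg x
        have hg0 := hgnonneg x
        have hprod := mul_le_mul_of_nonneg_right hnF (add_nonneg hf0 hg0)
        constructor
        · simp only [hDdef]
          nlinarith [mul_nonneg (mul_nonneg hn0 hF0) hg0]
        · simp only [hDdef]
          nlinarith [mul_nonneg (mul_nonneg hn0 hF0) hf0]
      have hInD : IntervalIntegrable (fun ω => (n:ℝ) * D ω) volume a b :=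
        (hD ha hb hab).const_mul _
      have hInS : IntervalIntegrable (fun ω => (1/Real.sin (δ₂/2)^2) * (f ω + g ω)) volume a b :=
        (hIsum ha hb hab).const_mul _
      rw [← intervalIntegral.integral_const_mul, ← intervalIntegral.integral_const_mul, abs_le]
      constructor
      · rw [← intervalIntegral.integral_neg]
        exact intervalIntegral.integral_mono_on hab hInS.neg hInD (fun x hx => (hptw x hx).2)
      · exact intervalIntegral.integral_mono_on hab hInD hInS (fun x hx => (hptw x hx).1)
    have hIL := htailb (-π) (-δ₂) le_rfl (by linarith) (by linarith)
      (fun x hx => by rw [abs_of_nonpos (by linarith [hx.2])]; linarith [hx.2])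
    have hIR := htailb δ₂ π (by linarith) le_rfl (by linarith)
      (fun x hx => by rw [abs_of_nonneg (by linarith [hx.1])]; exact hx.1)
    -- tail integrals of f+g sum to at most the full integral
    have hsum_tails : (∫ ω in (-π)..(-δ₂), (f ω + g ω)) + (∫ ω in δ₂..π, (f ω + g ω))
        ≤ ∫ ω in (-π)..π, (f ω + g ω) := by
      have hsp : ∫ ω in (-π)..π, (f ω + g ω)
          = (∫ ω in (-π)..(-δ₂), (f ω + g ω))
            + ((∫ ω in (-δ₂)..δ₂, (f ω + g ω)) + (∫ ω in δ₂..π, (f ω + g ω))) := by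
        rw [intervalIntegral.integral_add_adjacent_intervals
            (hIsum (by linarith) (by linarith) (by linarith))
            (hIsum (by linarith) le_rfl (by linarith)),
          intervalIntegral.integral_add_adjacent_intervals
            (hIsum le_rfl (by linarith) (by linarith))
            (hIsum (by linarith) le_rfl (by linarith))]
      have hm : 0 ≤ ∫ ω in (-δ₂)..δ₂, (f ω + g ω) :=
        intervalIntegral.integral_nonneg (by linarith)
          (fun u _ => add_nonneg (hfnonneg u) (hgnonneg u))
      linarith
    -- assemble
    have habs3 : |gmsd f n - gmsd g n|
        ≤ |(n:ℝ) * ∫ ω in (-π)..(-δ₂), D ω| + |(n:ℝ) * ∫ ω in (-δ₂)..δ₂, D ω|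
          + |(n:ℝ) * ∫ ω in δ₂..π, D ω| := by
      rw [hdiff, hsplitD]
      calc |(n:ℝ) * ((∫ ω in (-π)..(-δ₂), D ω)
            + ((∫ ω in (-δ₂)..δ₂, D ω) + (∫ ω in δ₂..π, D ω)))|
          = |(n:ℝ) * (∫ ω in (-π)..(-δ₂), D ω) + ((n:ℝ) * (∫ ω in (-δ₂)..δ₂, D ω)
              + (n:ℝ) * (∫ ω in δ₂..π, D ω))| := by ring_nf
        _ ≤ |(n:ℝ) * (∫ ω in (-π)..(-δ₂), D ω)| + |(n:ℝ) * (∫ ω in (-δ₂)..δ₂, D ω)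
              + (n:ℝ) * (∫ ω in δ₂..π, D ω)| := abs_add_le _ _
        _ ≤ |(n:ℝ) * (∫ ω in (-π)..(-δ₂), D ω)| + (|(n:ℝ) * (∫ ω in (-δ₂)..δ₂, D ω)|
              + |(n:ℝ) * (∫ ω in δ₂..π, D ω)|) := by linarith [abs_add_le ((n:ℝ) * (∫ ω in (-δ₂)..δ₂, D ω)) ((n:ℝ) * (∫ ω in δ₂..π, D ω))]
        _ = _ := by ring
    have hs₂sq : (0:ℝ) ≤ 1/Real.sin (δ₂/2)^2 := by positivity
    have hfin := mul_le_mul_of_nonneg_left hsum_tails hs₂sq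
    calc |gmsd f n - gmsd g n|
        ≤ |(n:ℝ) * ∫ ω in (-π)..(-δ₂), D ω| + |(n:ℝ) * ∫ ω in (-δ₂)..δ₂, D ω|
          + |(n:ℝ) * ∫ ω in δ₂..π, D ω| := habs3
      _ ≤ (1/Real.sin (δ₂/2)^2) * (∫ ω in (-π)..(-δ₂), (f ω + g ω)) + ε * gmsd g n
          + (1/Real.sin (δ₂/2)^2) * (∫ ω in δ₂..π, (f ω + g ω)) := by linarith
      _ ≤ ε * gmsd g n + (1/Real.sin (δ₂/2)^2) * ∫ ω in (-π)..π, (f ω + g ω) := by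
          rw [mul_add] at hfin
          linarith
  -- STEP 3 : conclusion
  rw [Metric.tendsto_atTop]
  intro ε hε
  have hε3 : 0 < ε/3 := by linarith
  obtain ⟨K, hK0, hKb⟩ := key_diff (ε/3) hε3
  set B : ℝ := max (3*(K+1)/ε) 1 with hBdef
  have hB1 : (1:ℝ) ≤ B := le_max_right _ _
  have h2πc : (0:ℝ) < 2*π*c := by positivity
  refine ⟨max 1 ⌈(B + 2*π*c/Real.sin (δ₁/2)^2)/(2*π*c)⌉₊, fun n hn => ?_⟩
  have hn1 : 1 ≤ n := le_trans (le_max_left _ _) hn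
  have hMg : B ≤ gmsd g n := by
    have h1 := key_lower n hn1
    have h2 : (B + 2*π*c/Real.sin (δ₁/2)^2)/(2*π*c) ≤ (n:ℝ) := by
      calc (B + 2*π*c/Real.sin (δ₁/2)^2)/(2*π*c)
          ≤ (⌈(B + 2*π*c/Real.sin (δ₁/2)^2)/(2*π*c)⌉₊ : ℝ) := Nat.le_ceil _
        _ ≤ (n:ℝ) := by
            have : ⌈(B + 2*π*c/Real.sin (δ₁/2)^2)/(2*π*c)⌉₊ ≤ n :=
              le_trans (le_max_right _ _) hn
            exact_mod_cast this
    rw [div_le_iff₀ h2πc] at h2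
    linarith
  have hMgpos : 0 < gmsd g n := lt_of_lt_of_le (by linarith) hMg
  have hd := hKb n hn1
  rw [Real.dist_eq]
  have heq : gmsd f n / gmsd g n - 1 = (gmsd f n - gmsd g n)/gmsd g n := by
    field_simp
  rw [heq, abs_div, abs_of_pos hMgpos, div_lt_iff₀ hMgpos]
  have hKB : K ≤ (ε/3) * B := by
    have h3 : 3*(K+1)/ε ≤ B := le_max_left _ _
    have h4 := mul_le_mul_of_nonneg_left h3 hε3.le
    have heq2 : (ε/3)*(3*(K+1)/ε) = K+1 := by field_simp
    linarith
  have hKMg : K ≤ (ε/3) * gmsd g n :=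
    le_trans hKB (mul_le_mul_of_nonneg_left hMg hε3.le)
  nlinarith
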